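/- Let Δx > 0, Δy > 0, Δt > 0, m₀, q₀ ∈ ℤ, let a, b, c : ℕ → ℤ → ℤ → ℝ be grid coefficients with |a(n,i,j)| ≤ A, |b(n,i,j)| ≤ B, |c(n,i,j)| ≤ C for all n, i, j, and suppose the CFL-type conditions A·Δt/Δx ≤ 1/2 and B·Δt/Δy ≤ 1/2 hold. Let u : ℝ → ℝ → ℝ → ℝ (written u(x,y,t)) and let U : ℕ → ℤ → ℤ → ℝ satisfy the two-dimensional Lax-Friedrichs delay scheme with exact initial data U(0,i,j) = u(i·Δx, j·Δy, 0) for all i, j ∈ ℤ. Define the truncation error T(n,i,j) := [u(i·Δx, j·Δy, (n+1)Δt) − (u((i+1)Δx, j·Δy, nΔt) + u((i−1)Δx, j·Δy, nΔt) + u(i·Δx, (j+1)Δy, nΔt) + u(i·Δx, (j−1)Δy, nΔt))/4]/Δt + a(n,i,j)·(u((i+1)Δx, j·Δy, nΔt) − u((i−1)Δx, j·Δy, nΔt))/(2Δx) + b(n,i,j)·(u(i·Δx, (j+1)Δy, nΔt) − u(i·Δx, (j−1)Δy, nΔt))/(2Δy) − c(n,i,j)·u((i−m₀)Δx, (j−q₀)Δy,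 nΔt), and assume |T(n,i,j)| ≤ T_max for all n, i, j. Then for every n ∈ ℕ and all i, j ∈ ℤ, |U(n,i,j) − u(i·Δx, j·Δy, n·Δt)| ≤ n·Δt·T_max·(1 + C·Δt)^n ≤ n·Δt·T_max·exp(C·n·Δt). (Convergence of the two-dimensional Lax-Friedrichs approximation on any finite time interval.) -/

import Mathlib

/-!
Write `S` for one step of the scheme acting on a grid function. `S` is linear, and under the CFL
conditions the four neighbour weights `1/4 ∓ Δt a / (2Δx)`, `1/4 ∓ Δt b / (2Δy)` are nonnegative
and sum to `1`, so `S` maps a grid function bounded by `E` to one bounded by `(1 + C Δt) E`.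
Sampling the exact solution on the grid, the truncation error is `Δt T = u(n+1) - S u(n)`, hence
the error `e` obeys `e(n+1) = S e(n) - Δt T`, and `|e(n)| ≤ (1 + C Δt) |e(n-1)| + Δt T_max`
with `e(0) = 0` unrolls to `|e(n)| ≤ n Δt T_max (1 + C Δt)^n`.
-/

open Real

noncomputable def laxFriedrichsDelayStep (Δx Δy Δt : ℝ) (m₀ q₀ : ℤ) (a b c : ℕ → ℤ → ℤ → ℝ)
    (V : ℤ → ℤ → ℝ) (n : ℕ) (i j : ℤ) : ℝ :=
  (1 / 4) * (V (i + 1) j + V (i - 1) j + V i (j + 1) + V i (j - 1))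
    - (Δt / (2 * Δx)) * a n i j * (V (i + 1) j - V (i - 1) j)
    - (Δt / (2 * Δy)) * b n i j * (V i (j + 1) - V i (j - 1))
    + Δt * c n i j * V (i - m₀) (j - q₀)

def gridSample (u : ℝ → ℝ → ℝ → ℝ) (Δx Δy Δt : ℝ) (n : ℕ) (i j : ℤ) : ℝ :=
  u (i * Δx) (j * Δy) (n * Δt)

noncomputable def laxFriedrichsDelayTruncation (u : ℝ → ℝ → ℝ → ℝ) (Δx Δy Δt : ℝ) (m₀ q₀ : ℤ)
    (a b c : ℕ → ℤ → ℤ → ℝ) (n : ℕ) (i j : ℤ) : ℝ :=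
  (u (i * Δx) (j * Δy) ((n + 1) * Δt)
      - (u ((i + 1 : ℤ) * Δx) (j * Δy) (n * Δt)
          + u ((i - 1 : ℤ) * Δx) (j * Δy) (n * Δt)
          + u (i * Δx) ((j + 1 : ℤ) * Δy) (n * Δt)
          + u (i * Δx) ((j - 1 : ℤ) * Δy) (n * Δt)) / 4) / Δt
    + a n i j * (u ((i + 1 : ℤ) * Δx) (j * Δy) (n * Δt)
          - u ((i - 1 : ℤ) * Δx) (j * Δy) (n * Δt)) / (2 * Δx)
    + b n i j * (u (i * Δx) ((j + 1 : ℤ) * Δy) (n * Δt)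
          - u (i * Δx) ((j - 1 : ℤ) * Δy) (n * Δt)) / (2 * Δy)
    - c n i j * u ((i - m₀ : ℤ) * Δx) ((j - q₀ : ℤ) * Δy) (n * Δt)

theorem abs_courant_mul_le {Δx Δt A a : ℝ} (hΔx : 0 < Δx) (hΔt : 0 ≤ Δt) (ha : |a| ≤ A)
    (hCFL : A * Δt / Δx ≤ 1 / 2) : |Δt / (2 * Δx) * a| ≤ 1 / 4 := by
  rw [abs_mul, abs_of_nonneg (by positivity), div_mul_eq_mul_div, div_le_iff₀ (by positivity)]
  rw [div_le_iff₀ hΔx] at hCFL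
  nlinarith

theorem abs_quarter_weighted_sum_le {α β p q r s E : ℝ} (hα : |α| ≤ 1 / 4) (hβ : |β| ≤ 1 / 4)
    (hp : |p| ≤ E) (hq : |q| ≤ E) (hr : |r| ≤ E) (hs : |s| ≤ E) :
    |(1 / 4 - α) * p + (1 / 4 + α) * q + (1 / 4 - β) * r + (1 / 4 + β) * s| ≤ E := by
  obtain ⟨hα₁, hα₂⟩ := abs_le.mp hα
  obtain ⟨hβ₁, hβ₂⟩ := abs_le.mp hβ
  obtain ⟨hp₁, hp₂⟩ := abs_le.mp hp
  obtain ⟨hq₁, hq₂⟩ := abs_le.mp hq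
  obtain ⟨hr₁, hr₂⟩ := abs_le.mp hr
  obtain ⟨hs₁, hs₂⟩ := abs_le.mp hs
  refine abs_le.mpr ⟨?_, ?_⟩ <;>
    nlinarith [mul_le_mul_of_nonneg_left hp₁ (by linarith : 0 ≤ 1 / 4 - α),
      mul_le_mul_of_nonneg_left hp₂ (by linarith : 0 ≤ 1 / 4 - α),
      mul_le_mul_of_nonneg_left hq₁ (by linarith : 0 ≤ 1 / 4 + α),
      mul_le_mul_of_nonneg_left hq₂ (by linarith : 0 ≤ 1 / 4 + α),
      mul_le_mul_of_nonneg_left hr₁ (by linarith : 0 ≤ 1 / 4 - β),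
      mul_le_mul_of_nonneg_left hr₂ (by linarith : 0 ≤ 1 / 4 - β),
      mul_le_mul_of_nonneg_left hs₁ (by linarith : 0 ≤ 1 / 4 + β),
      mul_le_mul_of_nonneg_left hs₂ (by linarith : 0 ≤ 1 / 4 + β)]

theorem one_add_pow_le_exp_mul {x : ℝ} (hx : -1 ≤ x) (n : ℕ) : (1 + x) ^ n ≤ exp (n * x) := by
  rw [exp_nat_mul]
  exact pow_le_pow_left₀ (by linarith) (by linarith [add_one_le_exp x]) n

theorem abs_le_mul_pow_of_abs_succ_le {ι : Type*} {e : ℕ → ι → ℝ} {K τ : ℝ} (hK : 0 ≤ K)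
    (hτ : 0 ≤ τ) (h₀ : ∀ i, e 0 i = 0)
    (hstep : ∀ n E, (∀ i, |e n i| ≤ E) → ∀ i, |e (n + 1) i| ≤ (1 + K) * E + τ) :
    ∀ n i, |e n i| ≤ n * τ * (1 + K) ^ n := by
  intro n
  induction n with
  | zero => simp [h₀]
  | succ n ih =>
    intro i
    have hpow : 1 ≤ (1 + K) ^ (n + 1) := one_le_pow₀ (by linarith)
    calc |e (n + 1) i| ≤ (1 + K) * (n * τ * (1 + K) ^ n) + τ := hstep n _ ih i
      _ ≤ (1 + K) * (n * τ * (1 + K) ^ n) + τ * (1 + K) ^ (n + 1) := by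
        gcongr; exact le_mul_of_one_le_right hτ hpow
      _ = (n + 1 : ℕ) * τ * (1 + K) ^ (n + 1) := by push_cast; ring

section LaxFriedrichs

variable {Δx Δy Δt : ℝ} {m₀ q₀ : ℤ} {a b c : ℕ → ℤ → ℤ → ℝ}

theorem laxFriedrichsDelayStep_sub (V W : ℤ → ℤ → ℝ) (n : ℕ) (i j : ℤ) :
    laxFriedrichsDelayStep Δx Δy Δt m₀ q₀ a b c (V - W) n i j =
      laxFriedrichsDelayStep Δx Δy Δt m₀ q₀ a b c V n i j
        - laxFriedrichsDelayStep Δx Δy Δt m₀ q₀ a b c W n i j := by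
  simp only [laxFriedrichsDelayStep, Pi.sub_apply]
  ring

theorem abs_laxFriedrichsDelayStep_le {A B C E : ℝ} (hΔx : 0 < Δx) (hΔy : 0 < Δy)
    (hΔt : 0 ≤ Δt) (ha : ∀ n i j, |a n i j| ≤ A) (hb : ∀ n i j, |b n i j| ≤ B)
    (hc : ∀ n i j, |c n i j| ≤ C) (hCFLx : A * Δt / Δx ≤ 1 / 2) (hCFLy : B * Δt / Δy ≤ 1 / 2)
    {V : ℤ → ℤ → ℝ} (hV : ∀ i j, |V i j| ≤ E) (n : ℕ) (i j : ℤ) :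
    |laxFriedrichsDelayStep Δx Δy Δt m₀ q₀ a b c V n i j| ≤ (1 + C * Δt) * E := by
  have hC : 0 ≤ C := (abs_nonneg _).trans (hc n i j)
  have hneighbours := abs_quarter_weighted_sum_le
    (abs_courant_mul_le hΔx hΔt (ha n i j) hCFLx) (abs_courant_mul_le hΔy hΔt (hb n i j) hCFLy)
    (hV (i + 1) j) (hV (i - 1) j) (hV i (j + 1)) (hV i (j - 1))
  have hdelay : |Δt * c n i j * V (i - m₀) (j - q₀)| ≤ C * Δt * E := by
    rw [abs_mul, abs_mul, abs_of_nonneg hΔt]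
    calc Δt * |c n i j| * |V (i - m₀) (j - q₀)| ≤ Δt * C * E := by
          gcongr
          exacts [hc n i j, hV _ _]
      _ = C * Δt * E := by ring
  calc |laxFriedrichsDelayStep Δx Δy Δt m₀ q₀ a b c V n i j|
      ≤ E + C * Δt * E := by
        refine (abs_add_le _ _).trans (add_le_add (le_of_eq_of_le ?_ hneighbours) hdelay)
        congr 1
        ring
    _ = (1 + C * Δt) * E := by ring

theorem mul_laxFriedrichsDelayTruncation (u : ℝ → ℝ → ℝ → ℝ) (hΔt : Δt ≠ 0) (n : ℕ) (i j : ℤ) :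
    Δt * laxFriedrichsDelayTruncation u Δx Δy Δt m₀ q₀ a b c n i j =
      gridSample u Δx Δy Δt (n + 1) i j
        - laxFriedrichsDelayStep Δx Δy Δt m₀ q₀ a b c (gridSample u Δx Δy Δt n) n i j := by
  simp only [laxFriedrichsDelayTruncation, gridSample, laxFriedrichsDelayStep]
  push_cast
  field_simp
  ring

theorem sub_gridSample_succ {u : ℝ → ℝ → ℝ → ℝ} {U : ℕ → ℤ → ℤ → ℝ} (hΔt : Δt ≠ 0)
    (hU : ∀ n i j, U (n + 1) i j = laxFriedrichsDelayStep Δx Δy Δt m₀ q₀ a b c (U n) n i j)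
    (n : ℕ) (i j : ℤ) :
    U (n + 1) i j - gridSample u Δx Δy Δt (n + 1) i j =
      laxFriedrichsDelayStep Δx Δy Δt m₀ q₀ a b c (U n - gridSample u Δx Δy Δt n) n i j
        - Δt * laxFriedrichsDelayTruncation u Δx Δy Δt m₀ q₀ a b c n i j := by
  rw [hU, laxFriedrichsDelayStep_sub, mul_laxFriedrichsDelayTruncation u hΔt]
  ring

end LaxFriedrichs

/-- Convergence of the two-dimensional Lax-Friedrichs approximation of the
hyperbolic PDE with point-wise delay on any finite time interval. -/
theorem laxFriedrichs2D_delay_convergence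
    (Δx Δy Δt A B C : ℝ) (hΔx : 0 < Δx) (hΔy : 0 < Δy) (hΔt : 0 < Δt)
    (m₀ q₀ : ℤ)
    (a b c : ℕ → ℤ → ℤ → ℝ)
    (ha : ∀ n i j, |a n i j| ≤ A) (hb : ∀ n i j, |b n i j| ≤ B)
    (hc : ∀ n i j, |c n i j| ≤ C)
    (hCFLx : A * Δt / Δx ≤ 1 / 2) (hCFLy : B * Δt / Δy ≤ 1 / 2)
    (u : ℝ → ℝ → ℝ → ℝ) (U : ℕ → ℤ → ℤ → ℝ)
    (hU : ∀ n i j, U (n + 1) i j =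
      (1 / 4) * (U n (i + 1) j + U n (i - 1) j + U n i (j + 1) + U n i (j - 1))
        - (Δt / (2 * Δx)) * a n i j * (U n (i + 1) j - U n (i - 1) j)
        - (Δt / (2 * Δy)) * b n i j * (U n i (j + 1) - U n i (j - 1))
        + Δt * c n i j * U n (i - m₀) (j - q₀))
    (hU0 : ∀ i j : ℤ, U 0 i j = u (i * Δx) (j * Δy) 0)
    (T : ℕ → ℤ → ℤ → ℝ)
    (hT : ∀ (n : ℕ) (i j : ℤ), T n i j =
      (u (i * Δx) (j * Δy) ((n + 1) * Δt)
          - (u ((i + 1 : ℤ) * Δx) (j * Δy) (n * Δt)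
              + u ((i - 1 : ℤ) * Δx) (j * Δy) (n * Δt)
              + u (i * Δx) ((j + 1 : ℤ) * Δy) (n * Δt)
              + u (i * Δx) ((j - 1 : ℤ) * Δy) (n * Δt)) / 4) / Δt
        + a n i j * (u ((i + 1 : ℤ) * Δx) (j * Δy) (n * Δt)
              - u ((i - 1 : ℤ) * Δx) (j * Δy) (n * Δt)) / (2 * Δx)
        + b n i j * (u (i * Δx) ((j + 1 : ℤ) * Δy) (n * Δt)
              - u (i * Δx) ((j - 1 : ℤ) * Δy) (n * Δt)) / (2 * Δy)
        - c n i j * u ((i - m₀ : ℤ) * Δx) ((j - q₀ : ℤ) * Δy) (n * Δt))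
    (T_max : ℝ) (hTmax : ∀ n i j, |T n i j| ≤ T_max) :
    ∀ (n : ℕ) (i j : ℤ),
      |U n i j - u (i * Δx) (j * Δy) (n * Δt)|
          ≤ n * Δt * T_max * (1 + C * Δt) ^ n ∧
      (n : ℝ) * Δt * T_max * (1 + C * Δt) ^ n
          ≤ n * Δt * T_max * Real.exp (C * n * Δt) := by
  have hC : 0 ≤ C := (abs_nonneg _).trans (hc 0 0 0)
  have hTmax₀ : 0 ≤ T_max := (abs_nonneg _).trans (hTmax 0 0 0)
  obtain rfl : T = laxFriedrichsDelayTruncation u Δx Δy Δt m₀ q₀ a b c :=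
    funext fun n => funext fun i => funext fun j => hT n i j
  have hconv := abs_le_mul_pow_of_abs_succ_le
    (e := fun n (p : ℤ × ℤ) => U n p.1 p.2 - gridSample u Δx Δy Δt n p.1 p.2)
    (mul_nonneg hC hΔt.le) (mul_nonneg hΔt.le hTmax₀) (fun p => by simp [hU0, gridSample])
    (fun n E hE p => by
      rw [sub_gridSample_succ hΔt.ne' hU]
      refine (abs_sub _ _).trans (add_le_add ?_ ?_)
      · exact abs_laxFriedrichsDelayStep_le hΔx hΔy hΔt.le ha hb hc hCFLx hCFLy
          (fun i j => hE (i, j)) n p.1 p.2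
      · rw [abs_mul, abs_of_pos hΔt]
        exact mul_le_mul_of_nonneg_left (hTmax n p.1 p.2) hΔt.le)
  intro n i j
  refine ⟨(hconv n (i, j)).trans_eq (by ring), ?_⟩
  gcongr
  calc (1 + C * Δt) ^ n ≤ exp (n * (C * Δt)) := one_add_pow_le_exp_mul (by nlinarith) n
    _ = exp (C * n * Δt) := by ring_nf
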